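/- arXiv:2206.03177 — 5 statements merged into one kernel-verified Lean document; each statement's English description precedes it below -/
import Mathlib

section
/- Let u, λ, t_j, t_k ∈ ℂ and assume that ϑ₁(u−t_j), ϑ₁(u−t_k), ϑ₁(t_j−t_k), ϑ₁(u−t_k−λ), ϑ₁(λ) and ϑ₁(−λ) are all nonzero. Then 𝔰(u−t_k;λ)·(ρ(u−t_j) + ρ(t_j−t_k) − ρ(u−t_k−λ) − ρ(λ)) = 𝔰(u−t_j;λ)·𝔰(t_j−t_k;λ). -/
open Complex Filter

/-- The theta function ϑ₁(u,τ). -/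
noncomputable def theta (τ u : ℂ) : ℂ :=
  -∑' m : ℤ, Complex.exp ((Real.pi : ℂ) * Complex.I * (m + 1/2)^2 * τ +
    2 * (Real.pi : ℂ) * Complex.I * (m + 1/2) * (u + 1/2))

/-- Derivative ϑ₁′ in u. -/
noncomputable def theta' (τ : ℂ) : ℂ → ℂ := deriv (theta τ)

/-- ρ(u) = ϑ₁′(u)/ϑ₁(u). -/
noncomputable def rho (τ u : ℂ) : ℂ := theta' τ u / theta τ u

/-- 𝔰(u;λ) = ϑ₁(u−λ)ϑ₁′(0)/(ϑ₁(u)ϑ₁(−λ)). -/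
noncomputable def fraks (τ u lam : ℂ) : ℂ :=
  theta τ (u - lam) * theta' τ 0 / (theta τ u * theta τ (-lam))


section ThetaAux

open Real

/-- single term of the theta series -/
noncomputable def thterm (τ u : ℂ) (m : ℤ) : ℂ :=
  Complex.exp ((Real.pi : ℂ) * Complex.I * (m + 1/2)^2 * τ +
    2 * (Real.pi : ℂ) * Complex.I * (m + 1/2) * (u + 1/2))

lemma theta_def (τ u : ℂ) : theta τ u = -∑' m : ℤ, thterm τ u m := rfl

lemma thterm_eq (τ u : ℂ) (m : ℤ) :
    thterm τ u m = Complex.exp ((π:ℂ)*I*τ/4 + (π:ℂ)*I*(u+1/2)) *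
      jacobiTheta₂_term m (u + 1/2 + τ/2) τ := by
  rw [thterm, jacobiTheta₂_term, ← Complex.exp_add]
  congr 1
  ring

lemma summable_norm_thterm {τ : ℂ} (hτ : 0 < τ.im) (u : ℂ) :
    Summable (fun m => ‖thterm τ u m‖) := by
  simp only [thterm_eq, norm_mul]
  exact (summable_norm_iff.mpr
    ((summable_jacobiTheta₂_term_iff (u + 1/2 + τ/2) τ).mpr hτ)).mul_left _

lemma hasSum_thterm {τ : ℂ} (hτ : 0 < τ.im) (u : ℂ) :
    HasSum (thterm τ u) (-theta τ u) := by
  have h := ((summable_norm_thterm hτ u).of_norm).hasSum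
  rwa [theta_def, neg_neg]

lemma theta_eq_jacobi {τ : ℂ} (u : ℂ) :
    theta τ u = -(Complex.exp ((π:ℂ)*I*τ/4 + (π:ℂ)*I*(u+1/2)) *
      jacobiTheta₂ (u + 1/2 + τ/2) τ) := by
  rw [theta_def, jacobiTheta₂, ← tsum_mul_left]
  congr 1
  exact tsum_congr fun m => thterm_eq τ u m

lemma differentiable_theta {τ : ℂ} (hτ : 0 < τ.im) : Differentiable ℂ (theta τ) := by
  have : theta τ = fun u => -(Complex.exp ((π:ℂ)*I*τ/4 + (π:ℂ)*I*(u+1/2)) *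
      jacobiTheta₂ (u + 1/2 + τ/2) τ) := funext fun u => theta_eq_jacobi u
  rw [this]
  apply Differentiable.neg
  apply Differentiable.mul
  · exact (differentiable_const _).add ((differentiable_const _).mul
      (differentiable_id.add (differentiable_const _))) |>.cexp
  · intro z
    exact DifferentiableAt.comp (g := fun x => jacobiTheta₂ x τ) (f := fun u : ℂ => u + 1/2 + τ/2) z
      (differentiableAt_jacobiTheta₂_fst (z + 1/2 + τ/2) hτ) (by fun_prop)

lemma exp_add_int_mul_two_pi (w : ℂ) (k : ℤ) :
    Complex.exp (w + k * (2 * (π:ℂ) * I)) = Complex.exp w := by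
  rw [Complex.exp_add, Complex.exp_int_mul_two_pi_mul_I, mul_one]

lemma exp_eq_of_shift {w₁ w₂ : ℂ} (k : ℤ) (h : w₁ = w₂ + k * (2 * (π:ℂ) * I)) :
    Complex.exp w₁ = Complex.exp w₂ := by
  rw [h, exp_add_int_mul_two_pi]

lemma exp_eq_neg_of_shift {w₁ w₂ : ℂ} (k : ℤ) (h : w₁ = w₂ + (2 * k + 1) * ((π:ℂ) * I)) :
    Complex.exp w₁ = -Complex.exp w₂ := by
  have h2 : w₁ = (w₂ + (π:ℂ) * I) + k * (2 * (π:ℂ) * I) := by rw [h]; push_cast; ring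
  rw [h2, exp_add_int_mul_two_pi, Complex.exp_add, Complex.exp_pi_mul_I, mul_neg_one]

lemma int_cast_half {n : ℤ} (L : ℂ) (h : (2*(n:ℂ)) = L) : (n : ℂ) = L / 2 := by
  linear_combination h / 2

-- termwise lemma (a)
lemma term_a (τ x y z w : ℂ) (a b c d n1 n2 n3 n4 : ℤ)
    (h1 : 2*n1 = a+b+c+d+1) (h2 : 2*n2 = a+b-c-d-1)
    (h3 : 2*n3 = a-b+c-d-1) (h4 : 2*n4 = a-b-c+d-1) :
    thterm τ (x+z) n1 * (thterm τ (x-z) n2 * (thterm τ (y+w) n3 * thterm τ (y-w) n4)) =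
    thterm τ (x+y) a * (thterm τ (x-y) b * (thterm τ (z+w) c * thterm τ (z-w) d)) := by
  have c1 : (n1 : ℂ) = ((a:ℂ)+b+c+d+1)/2 := by have hh := congrArg (fun t : ℤ => (t:ℂ)) h1; push_cast at hh; linear_combination hh / 2
  have c2 : (n2 : ℂ) = ((a:ℂ)+b-c-d-1)/2 := by have hh := congrArg (fun t : ℤ => (t:ℂ)) h2; push_cast at hh; linear_combination hh / 2
  have c3 : (n3 : ℂ) = ((a:ℂ)-b+c-d-1)/2 := by have hh := congrArg (fun t : ℤ => (t:ℂ)) h3; push_cast at hh; linear_combination hh / 2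
  have c4 : (n4 : ℂ) = ((a:ℂ)-b-c+d-1)/2 := by have hh := congrArg (fun t : ℤ => (t:ℂ)) h4; push_cast at hh; linear_combination hh / 2
  simp only [thterm, ← Complex.exp_add]
  apply exp_eq_of_shift (a - n1)
  push_cast
  rw [c1, c2, c3, c4]
  ring

-- termwise lemma (b)
lemma term_b (τ x y z w : ℂ) (a b c d D : ℤ) (h : 2*D = a+b-c-d) :
    thterm τ (x+z) (a-D) * (thterm τ (x-z) (b-D) * (thterm τ (y+w) (c+D) * thterm τ (y-w) (d+D))) =
    thterm τ (y+z) a * (thterm τ (y-z) b * (thterm τ (x+w) c * thterm τ (x-w) d)) := by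
  have cD : (D : ℂ) = ((a:ℂ)+b-c-d)/2 := by
    have hh := congrArg (fun t : ℤ => (t:ℂ)) h; push_cast at hh; linear_combination hh / 2
  simp only [thterm, ← Complex.exp_add]
  congr 1
  push_cast
  rw [cD]
  ring

-- termwise lemma (c)
lemma term_c (τ x y z w : ℂ) (a b c d n1 n2 n3 n4 : ℤ)
    (h1 : 2*n1 = a-b+c+d) (h2 : 2*n2 = a-b-c-d-2)
    (h3 : 2*n3 = a+b+c-d) (h4 : 2*n4 = a+b-c+d) :
    thterm τ (y+z) n1 * (thterm τ (y-z) n2 * (thterm τ (x+w) n3 * thterm τ (x-w) n4)) =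
    -(thterm τ (x+y) a * (thterm τ (x-y) b * (thterm τ (z+w) c * thterm τ (z-w) d))) := by
  have c1 : (n1 : ℂ) = ((a:ℂ)-b+c+d)/2 := by have hh := congrArg (fun t : ℤ => (t:ℂ)) h1; push_cast at hh; linear_combination hh / 2
  have c2 : (n2 : ℂ) = ((a:ℂ)-b-c-d-2)/2 := by have hh := congrArg (fun t : ℤ => (t:ℂ)) h2; push_cast at hh; linear_combination hh / 2
  have c3 : (n3 : ℂ) = ((a:ℂ)+b+c-d)/2 := by have hh := congrArg (fun t : ℤ => (t:ℂ)) h3; push_cast at hh; linear_combination hh / 2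
  have c4 : (n4 : ℂ) = ((a:ℂ)+b-c+d)/2 := by have hh := congrArg (fun t : ℤ => (t:ℂ)) h4; push_cast at hh; linear_combination hh / 2
  simp only [thterm, ← Complex.exp_add]
  apply exp_eq_neg_of_shift (a - b - n1 - 1)
  push_cast
  rw [c1, c2, c3, c4]
  ring

abbrev J := ℤ × ℤ × ℤ × ℤ

def SS (m : J) : ℤ := m.1 + m.2.1 + m.2.2.1 + m.2.2.2

def Os : Set J := {m | SS m % 2 = 1}

noncomputable def Gt (τ v₁ v₂ v₃ v₄ : ℂ) : J → ℂ := fun m =>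
  thterm τ v₁ m.1 * (thterm τ v₂ m.2.1 * (thterm τ v₃ m.2.2.1 * thterm τ v₄ m.2.2.2))


lemma hasSum_Gt {τ : ℂ} (hτ : 0 < τ.im) (v₁ v₂ v₃ v₄ : ℂ) :
    HasSum (Gt τ v₁ v₂ v₃ v₄) (theta τ v₁ * theta τ v₂ * theta τ v₃ * theta τ v₄) := by
  have n1 := summable_norm_thterm hτ v₁
  have n2 := summable_norm_thterm hτ v₂
  have n3 := summable_norm_thterm hτ v₃
  have n4 := summable_norm_thterm hτ v₄
  have s34 := summable_mul_of_summable_norm (f := thterm τ v₃) (g := thterm τ v₄) n3 n4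
  have h34 := (hasSum_thterm hτ v₃).mul (hasSum_thterm hτ v₄) s34
  have ns34 := Summable.mul_norm (f := thterm τ v₃) (g := thterm τ v₄) n3 n4
  have s234 := summable_mul_of_summable_norm (f := thterm τ v₂)
    (g := fun y : ℤ × ℤ => thterm τ v₃ y.1 * thterm τ v₄ y.2) n2 ns34
  have h234 := (hasSum_thterm hτ v₂).mul h34 s234
  have ns234 := Summable.mul_norm (f := thterm τ v₂)
    (g := fun y : ℤ × ℤ => thterm τ v₃ y.1 * thterm τ v₄ y.2) n2 ns34
  have s1234 := summable_mul_of_summable_norm (f := thterm τ v₁)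
    (g := fun y : ℤ × ℤ × ℤ => thterm τ v₂ y.1 * (thterm τ v₃ y.2.1 * thterm τ v₄ y.2.2)) n1 ns234
  have h1234 := (hasSum_thterm hτ v₁).mul h234 s1234
  have e : (-theta τ v₁) * ((-theta τ v₂) * ((-theta τ v₃) * (-theta τ v₄)))
      = theta τ v₁ * theta τ v₂ * theta τ v₃ * theta τ v₄ := by ring
  rw [e] at h1234
  exact h1234

def af : J → J := fun m =>
  ((m.1+m.2.1+m.2.2.1+m.2.2.2+1)/2, (m.1+m.2.1-m.2.2.1-m.2.2.2-1)/2,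
   (m.1-m.2.1+m.2.2.1-m.2.2.2-1)/2, (m.1-m.2.1-m.2.2.1+m.2.2.2-1)/2)

def gf : J → J := fun m =>
  (m.1 - (m.1+m.2.1-m.2.2.1-m.2.2.2)/2, m.2.1 - (m.1+m.2.1-m.2.2.1-m.2.2.2)/2,
   m.2.2.1 + (m.1+m.2.1-m.2.2.1-m.2.2.2)/2, m.2.2.2 + (m.1+m.2.1-m.2.2.1-m.2.2.2)/2)

def df : J → J := fun m =>
  ((m.1-m.2.1+m.2.2.1+m.2.2.2)/2, (m.1-m.2.1-m.2.2.1-m.2.2.2-2)/2,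
   (m.1+m.2.1+m.2.2.1-m.2.2.2)/2, (m.1+m.2.1-m.2.2.1+m.2.2.2)/2)

def dfi : J → J := fun m =>
  ((m.1+m.2.1+m.2.2.1+m.2.2.2+1)/2, -1 - (m.1+m.2.1-m.2.2.1-m.2.2.2-1)/2,
   (m.1-m.2.1+m.2.2.1-m.2.2.2-1)/2, (m.1-m.2.1-m.2.2.1+m.2.2.2-1)/2)

def eA : ↥Os ≃ ↥Os where
  toFun m := ⟨af m.1, by
    obtain ⟨⟨a,b,c,d⟩, hm⟩ := m
    simp only [Os, SS, Set.mem_setOf_eq, af] at hm ⊢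
    omega⟩
  invFun m := ⟨af m.1, by
    obtain ⟨⟨a,b,c,d⟩, hm⟩ := m
    simp only [Os, SS, Set.mem_setOf_eq, af] at hm ⊢
    omega⟩
  left_inv m := by
    obtain ⟨⟨a,b,c,d⟩, hm⟩ := m
    simp only [Os, SS, Set.mem_setOf_eq] at hm
    apply Subtype.ext
    simp only [af, Prod.mk.injEq]
    refine ⟨by omega, by omega, by omega, by omega⟩
  right_inv m := by
    obtain ⟨⟨a,b,c,d⟩, hm⟩ := m
    simp only [Os, SS, Set.mem_setOf_eq] at hm
    apply Subtype.ext
    simp only [af, Prod.mk.injEq]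
    refine ⟨by omega, by omega, by omega, by omega⟩

def eG : ↥(Osᶜ) ≃ ↥(Osᶜ) where
  toFun m := ⟨gf m.1, by
    obtain ⟨⟨a,b,c,d⟩, hm⟩ := m
    simp only [Os, SS, Set.mem_compl_iff, Set.mem_setOf_eq, gf] at hm ⊢
    omega⟩
  invFun m := ⟨gf m.1, by
    obtain ⟨⟨a,b,c,d⟩, hm⟩ := m
    simp only [Os, SS, Set.mem_compl_iff, Set.mem_setOf_eq, gf] at hm ⊢
    omega⟩
  left_inv m := by
    obtain ⟨⟨a,b,c,d⟩, hm⟩ := m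
    simp only [Os, SS, Set.mem_compl_iff, Set.mem_setOf_eq] at hm
    apply Subtype.ext
    simp only [gf, Prod.mk.injEq]
    refine ⟨by omega, by omega, by omega, by omega⟩
  right_inv m := by
    obtain ⟨⟨a,b,c,d⟩, hm⟩ := m
    simp only [Os, SS, Set.mem_compl_iff, Set.mem_setOf_eq] at hm
    apply Subtype.ext
    simp only [gf, Prod.mk.injEq]
    refine ⟨by omega, by omega, by omega, by omega⟩

def eD : ↥(Osᶜ) ≃ ↥Os where
  toFun m := ⟨df m.1, by
    obtain ⟨⟨a,b,c,d⟩, hm⟩ := m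
    simp only [Os, SS, Set.mem_compl_iff, Set.mem_setOf_eq, df] at hm ⊢
    omega⟩
  invFun m := ⟨dfi m.1, by
    obtain ⟨⟨a,b,c,d⟩, hm⟩ := m
    simp only [Os, SS, Set.mem_compl_iff, Set.mem_setOf_eq, dfi] at hm ⊢
    omega⟩
  left_inv m := by
    obtain ⟨⟨a,b,c,d⟩, hm⟩ := m
    simp only [Os, SS, Set.mem_compl_iff, Set.mem_setOf_eq] at hm
    apply Subtype.ext
    simp only [df, dfi, Prod.mk.injEq]
    refine ⟨by omega, by omega, by omega, by omega⟩
  right_inv m := by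
    obtain ⟨⟨a,b,c,d⟩, hm⟩ := m
    simp only [Os, SS, Set.mem_setOf_eq] at hm
    apply Subtype.ext
    simp only [df, dfi, Prod.mk.injEq]
    refine ⟨by omega, by omega, by omega, by omega⟩

lemma sum_odd_13 (τ x y z w : ℂ) :
    ∑' m : ↥Os, Gt τ (x+z) (x-z) (y+w) (y-w) ↑m
      = ∑' m : ↥Os, Gt τ (x+y) (x-y) (z+w) (z-w) ↑m := by
  rw [← Equiv.tsum_eq eA (fun m : ↥Os => Gt τ (x+z) (x-z) (y+w) (y-w) ↑m)]
  refine tsum_congr fun m => ?_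
  obtain ⟨⟨a,b,c,d⟩, hm⟩ := m
  have hm' : (a+b+c+d) % 2 = 1 := by simpa [Os, SS] using hm
  show Gt τ (x+z) (x-z) (y+w) (y-w) (af (a,b,c,d)) = Gt τ (x+y) (x-y) (z+w) (z-w) (a,b,c,d)
  simp only [Gt, af]
  exact term_a τ x y z w a b c d _ _ _ _ (by omega) (by omega) (by omega) (by omega)

lemma sum_even_12 (τ x y z w : ℂ) :
    ∑' m : ↥(Osᶜ), Gt τ (x+z) (x-z) (y+w) (y-w) ↑m
      = ∑' m : ↥(Osᶜ), Gt τ (y+z) (y-z) (x+w) (x-w) ↑m := by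
  rw [← Equiv.tsum_eq eG (fun m : ↥(Osᶜ) => Gt τ (x+z) (x-z) (y+w) (y-w) ↑m)]
  refine tsum_congr fun m => ?_
  obtain ⟨⟨a,b,c,d⟩, hm⟩ := m
  have hm' : ¬ ((a+b+c+d) % 2 = 1) := by simpa [Os, SS] using hm
  show Gt τ (x+z) (x-z) (y+w) (y-w) (gf (a,b,c,d)) = Gt τ (y+z) (y-z) (x+w) (x-w) (a,b,c,d)
  simp only [Gt, gf]
  exact term_b τ x y z w a b c d _ (by omega)

lemma sum_odd2_neg_even3 (τ x y z w : ℂ) :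
    ∑' m : ↥Os, Gt τ (y+z) (y-z) (x+w) (x-w) ↑m
      = -∑' m : ↥(Osᶜ), Gt τ (x+y) (x-y) (z+w) (z-w) ↑m := by
  rw [← Equiv.tsum_eq eD (fun m : ↥Os => Gt τ (y+z) (y-z) (x+w) (x-w) ↑m), ← tsum_neg]
  refine tsum_congr fun m => ?_
  obtain ⟨⟨a,b,c,d⟩, hm⟩ := m
  have hm' : ¬ ((a+b+c+d) % 2 = 1) := by simpa [Os, SS] using hm
  show Gt τ (y+z) (y-z) (x+w) (x-w) (df (a,b,c,d)) = -Gt τ (x+y) (x-y) (z+w) (z-w) (a,b,c,d)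
  simp only [Gt, df]
  exact term_c τ x y z w a b c d _ _ _ _ (by omega) (by omega) (by omega) (by omega)

lemma weier {τ : ℂ} (hτ : 0 < τ.im) (x y z w : ℂ) :
    theta τ (x+z) * theta τ (x-z) * theta τ (y+w) * theta τ (y-w)
      - theta τ (y+z) * theta τ (y-z) * theta τ (x+w) * theta τ (x-w)
      = theta τ (x+y) * theta τ (x-y) * theta τ (z+w) * theta τ (z-w) := by
  have split : ∀ v₁ v₂ v₃ v₄ : ℂ, theta τ v₁ * theta τ v₂ * theta τ v₃ * theta τ v₄
      = (∑' m : ↥Os, Gt τ v₁ v₂ v₃ v₄ ↑m) + ∑' m : ↥(Osᶜ), Gt τ v₁ v₂ v₃ v₄ ↑m := by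
    intro v₁ v₂ v₃ v₄
    rw [← (hasSum_Gt hτ v₁ v₂ v₃ v₄).tsum_eq]
    exact (Summable.tsum_add_tsum_compl ((hasSum_Gt hτ v₁ v₂ v₃ v₄).summable.subtype _)
      ((hasSum_Gt hτ v₁ v₂ v₃ v₄).summable.subtype _)).symm
  rw [split (x+z) (x-z) (y+w) (y-w), split (y+z) (y-z) (x+w) (x-w),
    split (x+y) (x-y) (z+w) (z-w), sum_odd_13 τ x y z w, sum_even_12 τ x y z w,
    sum_odd2_neg_even3 τ x y z w]
  ring

lemma thterm_neg (τ u : ℂ) (m : ℤ) : thterm τ (-u) (-1 - m) = -thterm τ u m := by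
  simp only [thterm]
  apply exp_eq_neg_of_shift (-1 - m)
  push_cast
  ring

lemma theta_neg (τ u : ℂ) : theta τ (-u) = -theta τ u := by
  have h1 : ∑' m : ℤ, thterm τ (-u) m = ∑' m : ℤ, -thterm τ u m := by
    rw [← Equiv.tsum_eq (Equiv.subLeft (-1 : ℤ)) (thterm τ (-u))]
    refine tsum_congr fun m => ?_
    simpa [Equiv.subLeft] using thterm_neg τ u m
  rw [theta_def, theta_def, h1, tsum_neg]

lemma theta_zero (τ : ℂ) : theta τ 0 = 0 := by
  have h := theta_neg τ 0
  rw [neg_zero] at h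
  linear_combination h / 2

lemma theta'_neg {τ : ℂ} (hτ : 0 < τ.im) (u : ℂ) :
    deriv (theta τ) (-u) = deriv (theta τ) u := by
  have h0 : HasDerivAt (fun v : ℂ => -v) (-1) u := (hasDerivAt_id' u).neg
  have h1 : HasDerivAt (fun v => theta τ (-v)) (deriv (theta τ) (-u) * (-1)) u :=
    (differentiable_theta hτ (-u)).hasDerivAt.comp u h0
  have h2 : HasDerivAt (fun v : ℂ => -theta τ v) (-deriv (theta τ) u) u :=
    ((differentiable_theta hτ u).hasDerivAt).neg
  have he : (fun v : ℂ => theta τ (-v)) = fun v : ℂ => -theta τ v :=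
    funext fun v => theta_neg τ v
  rw [he] at h1
  have := h1.unique h2
  linear_combination -this

lemma deriv_weier {τ : ℂ} (hτ : 0 < τ.im) (x y z : ℂ) :
    theta τ (x+z) * theta τ (x-z) *
        (deriv (theta τ) (y+z) * theta τ (y-z) - theta τ (y+z) * deriv (theta τ) (y-z))
      - theta τ (y+z) * theta τ (y-z) *
        (deriv (theta τ) (x+z) * theta τ (x-z) - theta τ (x+z) * deriv (theta τ) (x-z))
      = -(theta τ (x+y) * theta τ (x-y) * theta τ (2*z) * deriv (theta τ) 0) := by
  have D := differentiable_theta hτ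
  -- derivative facts for the three products as functions of w at w = z
  have hplus : ∀ c : ℂ, HasDerivAt (fun w : ℂ => theta τ (c + w)) (deriv (theta τ) (c + z)) z := by
    intro c
    have h0 : HasDerivAt (fun w : ℂ => c + w) 1 z := by simpa using (hasDerivAt_id z).const_add c
    have := (D (c + z)).hasDerivAt.comp z h0
    rw [mul_one] at this
    exact this
  have hminus : ∀ c : ℂ, HasDerivAt (fun w : ℂ => theta τ (c - w)) (-deriv (theta τ) (c - z)) z := by
    intro c
    have h0 : HasDerivAt (fun w : ℂ => c - w) (-1) z := by
      simpa using (hasDerivAt_id z).const_sub c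
    have := (D (c - z)).hasDerivAt.comp z h0
    rw [mul_neg_one] at this
    exact this
  have hy := (hplus y).mul (hminus y)
  have hx := (hplus x).mul (hminus x)
  have hz := (hplus z).mul (hminus z)
  have hF : HasDerivAt (fun w : ℂ =>
      theta τ (x+z) * theta τ (x-z) * (theta τ (y + w) * theta τ (y - w))
      - theta τ (y+z) * theta τ (y-z) * (theta τ (x + w) * theta τ (x - w))
      - theta τ (x+y) * theta τ (x-y) * (theta τ (z + w) * theta τ (z - w)))
      ((theta τ (x+z) * theta τ (x-z)) *
          (deriv (theta τ) (y+z) * theta τ (y-z) + theta τ (y+z) * -deriv (theta τ) (y-z))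
        - (theta τ (y+z) * theta τ (y-z)) *
          (deriv (theta τ) (x+z) * theta τ (x-z) + theta τ (x+z) * -deriv (theta τ) (x-z))
        - (theta τ (x+y) * theta τ (x-y)) *
          (deriv (theta τ) (z+z) * theta τ (z-z) + theta τ (z+z) * -deriv (theta τ) (z-z))) z :=
    ((hy.const_mul _).sub (hx.const_mul _)).sub (hz.const_mul _)
  have hzero : (fun w : ℂ =>
      theta τ (x+z) * theta τ (x-z) * (theta τ (y + w) * theta τ (y - w))
      - theta τ (y+z) * theta τ (y-z) * (theta τ (x + w) * theta τ (x - w))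
      - theta τ (x+y) * theta τ (x-y) * (theta τ (z + w) * theta τ (z - w))) = fun _ => 0 := by
    funext w
    have h := weier hτ x y z w
    linear_combination h
  rw [hzero] at hF
  have huniq := hF.unique (hasDerivAt_const z 0)
  rw [show z + z = 2 * z from by ring, sub_self, theta_zero τ] at huniq
  linear_combination huniq

lemma cleared {τ : ℂ} (hτ : 0 < τ.im) (a b lam : ℂ) :
    theta τ lam * theta τ (a+b-lam) * (deriv (theta τ) a * theta τ b + theta τ a * deriv (theta τ) b)
      - theta τ a * theta τ b *
        (deriv (theta τ) (a+b-lam) * theta τ lam + theta τ (a+b-lam) * deriv (theta τ) lam)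
      = -(deriv (theta τ) 0 * theta τ (a-lam) * theta τ (b-lam) * theta τ (a+b)) := by
  have h := deriv_weier hτ ((a+b)/2 - lam) ((a-b)/2) ((a+b)/2)
  rw [show (a+b)/2 - lam + (a+b)/2 = a+b-lam from by ring,
      show (a+b)/2 - lam - (a+b)/2 = -lam from by ring,
      show (a-b)/2 + (a+b)/2 = a from by ring,
      show (a-b)/2 - (a+b)/2 = -b from by ring,
      show (a+b)/2 - lam + (a-b)/2 = a - lam from by ring,
      show (a+b)/2 - lam - (a-b)/2 = b - lam from by ring,
      show (2:ℂ) * ((a+b)/2) = a + b from by ring,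
      theta_neg τ lam, theta_neg τ b, theta'_neg hτ lam, theta'_neg hτ b] at h
  linear_combination h


end ThetaAux

theorem theta_relation_one (τ : ℂ) (hτ : 0 < τ.im) (u lam tj tk : ℂ)
    (h1 : theta τ (u - tj) ≠ 0) (h2 : theta τ (u - tk) ≠ 0)
    (h3 : theta τ (tj - tk) ≠ 0) (h4 : theta τ (u - tk - lam) ≠ 0)
    (h5 : theta τ lam ≠ 0) (h6 : theta τ (-lam) ≠ 0) :
    fraks τ (u - tk) lam *
        (rho τ (u - tj) + rho τ (tj - tk) - rho τ (u - tk - lam) - rho τ lam) =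
      fraks τ (u - tj) lam * fraks τ (tj - tk) lam := by
  have e1 : (u - tj) + (tj - tk) = u - tk := by ring
  have e2 : (u - tj) + (tj - tk) - lam = u - tk - lam := by ring
  have h := cleared hτ (u - tj) (tj - tk) lam
  rw [e2, e1] at h
  simp only [fraks, rho, theta', theta_neg τ lam]
  rw [theta_neg τ lam] at h6
  have h5' : -theta τ lam ≠ 0 := h6
  field_simp [h1, h2, h3, h4, h5]
  linear_combination (-deriv (theta τ) 0) * h
end

section
/- Let a, b, d ∈ ℂ with a ≠ 0, d ≠ 0 and b ≠ 1. Then the determinant of the 2×2 complex matrix [[ −(a−1)(a−b)/(a(1−b)), (b − ab − bd + ad)/(1−b) ], [ (1 − d⁻¹ − a⁻¹ + a⁻¹·b·d⁻¹)/(1−b), −(d−1)(d−b)/(d(1−b)) ]] equals 1. -/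
open Complex

theorem det_H11_zero_infty (a b d : ℂ) (ha : a ≠ 0) (hd : d ≠ 0) (hb : b ≠ 1) :
    Matrix.det
      !![-((a - 1) * (a - b)) / (a * (1 - b)), (b - a * b - b * d + a * d) / (1 - b);
         (1 - d⁻¹ - a⁻¹ + a⁻¹ * b * d⁻¹) / (1 - b), -((d - 1) * (d - b)) / (d * (1 - b))]
      = 1 := by
  have hb' : (1 : ℂ) - b ≠ 0 := sub_ne_zero.mpr (Ne.symm hb)
  have h1 : (1 - d⁻¹ - a⁻¹ + a⁻¹ * b * d⁻¹) / (1 - b)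
      = (a * d - a - d + b) / (a * d * (1 - b)) := by
    rw [div_eq_div_iff hb' (by simp [ha, hd, hb', mul_ne_zero])]
    field_simp
  have hA : a * (1 - b) * (d * (1 - b)) ≠ 0 := by simp [ha, hd, hb', mul_ne_zero]
  have hB : (1 - b) * (a * d * (1 - b)) ≠ 0 := by simp [ha, hd, hb', mul_ne_zero]
  rw [Matrix.det_fin_two_of, h1, div_mul_div_comm, div_mul_div_comm,
    div_sub_div _ _ hA hB, div_eq_one_iff_eq (by simp [ha, hd, hb', mul_ne_zero])]
  ring
end

section
/- Let m ≥ 1 and let x_1, …, x_{m+1} ∈ ℂ with x_i ≠ 1 for every i. Define the m×m complex tridiagonal matrix A by: A_{ii} = (1 − x_i·x_{i+1}) / ((1−x_i)(1−x_{i+1})) for 1 ≤ i ≤ m; A_{i,i+1} = −1/(1−x_{i+1}) and A_{i+1,i} = −x_{i+1}/(1−x_{i+1}) for 1 ≤ i ≤ m−1; and A_{ij} = 0 whenever |i−j| ≥ 2. Then det A = (1 − x_1·x_2⋯x_{m+1}) / ∏_{i=1}^{m+1} (1 − x_i). -/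
/-!
With `u = 1 / (1 - x)` and `v = x / (1 - x)`, so that `u - v = 1`, the matrix is tridiagonal with
diagonal `u i + v (i + 1)`, superdiagonal `-u (i + 1)` and subdiagonal `-v (i + 1)`. Expanding along
the last row gives the continuant recurrence `D (n + 2) = a (n + 1) * D (n + 1) - b n * c n * D n`,
whose solution under `u - v = 1` is `D n = ∏_{i ≤ n} u i - ∏_{i ≤ n} v i = (1 - ∏ x) / ∏ (1 - x)`.
-/

namespace Matrix

variable {R : Type*} [CommRing R]

def tridiagonal (n : ℕ) (a b c : ℕ → R) : Matrix (Fin n) (Fin n) R :=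
  of fun i j =>
    if (i : ℕ) = j then a i
    else if (j : ℕ) = i + 1 then b i
    else if (i : ℕ) = j + 1 then c j
    else 0

variable (a b c : ℕ → R)

theorem tridiagonal_apply_eq_zero {n : ℕ} {i j : Fin n} (h : (i : ℕ) + 1 < j ∨ (j : ℕ) + 1 < i) :
    tridiagonal n a b c i j = 0 := by
  simp only [tridiagonal, of_apply]
  rw [if_neg (by omega), if_neg (by omega), if_neg (by omega)]

@[simp]
theorem tridiagonal_submatrix_castSucc (n : ℕ) :
    (tridiagonal (n + 1) a b c).submatrix Fin.castSucc Fin.castSucc = tridiagonal n a b c := by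
  ext i j
  simp [tridiagonal]

theorem det_tridiagonal_succ_succ (n : ℕ) :
    (tridiagonal (n + 2) a b c).det =
      a (n + 1) * (tridiagonal (n + 1) a b c).det - b n * c n * (tridiagonal n a b c).det := by
  -- deleting the last row and column `n` leaves a minor whose last column is zero except for `b n`
  have hminor : ((tridiagonal (n + 2) a b c).submatrix Fin.castSucc
      (Fin.last n).castSucc.succAbove).det = b n * (tridiagonal n a b c).det := by
    have hcols : (Fin.last n).castSucc.succAbove ∘ Fin.castSucc = Fin.castSucc ∘ Fin.castSucc :=
      funext fun j => Fin.succAbove_castSucc_of_lt _ _ (Fin.castSucc_lt_last j)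
    have hzero (i : Fin n) : tridiagonal (n + 2) a b c i.castSucc.castSucc (Fin.last (n + 1)) = 0 :=
      tridiagonal_apply_eq_zero a b c (Or.inl (by simp))
    have hb : tridiagonal (n + 2) a b c (Fin.last n).castSucc (Fin.last (n + 1)) = b n := by
      simp [tridiagonal]
    rw [det_succ_column _ (Fin.last n), Fin.sum_univ_castSucc]
    simp only [submatrix_apply, Fin.succAbove_castSucc_self, Fin.succ_last, hzero, hb, mul_zero,
      zero_mul, Finset.sum_const_zero, zero_add, Fin.val_last, ← two_mul, pow_mul, neg_one_sq,
      one_pow, one_mul, Fin.succAbove_last, submatrix_submatrix, hcols]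
    rw [← submatrix_submatrix, tridiagonal_submatrix_castSucc, tridiagonal_submatrix_castSucc]
  have hzero (j : Fin n) : tridiagonal (n + 2) a b c (Fin.last (n + 1)) j.castSucc.castSucc = 0 :=
    tridiagonal_apply_eq_zero a b c (Or.inr (by simp))
  have hc : tridiagonal (n + 2) a b c (Fin.last (n + 1)) (Fin.last n).castSucc = c n := by
    simp [tridiagonal, show n ≠ n + 2 by omega]
  have ha : tridiagonal (n + 2) a b c (Fin.last (n + 1)) (Fin.last (n + 1)) = a (n + 1) := by
    simp [tridiagonal]
  rw [det_succ_row _ (Fin.last (n + 1)), Fin.sum_univ_castSucc, Fin.sum_univ_castSucc]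
  simp [hzero, hminor, hc, ha]
  ring

theorem det_tridiagonal_eq_prod_sub_prod (u v : ℕ → R) (huv : ∀ i, u i - v i = 1) (n : ℕ) :
    (tridiagonal n (fun i => u i + v (i + 1)) (fun i => -u (i + 1)) (fun i => -v (i + 1))).det =
      ∏ i ∈ Finset.range (n + 1), u i - ∏ i ∈ Finset.range (n + 1), v i := by
  have hu (i : ℕ) : u i = v i + 1 := by rw [← huv i]; ring
  induction n using Nat.twoStepInduction with
  | zero => simp [huv]
  | one => simp [tridiagonal, Finset.prod_range_succ, hu]; ring
  | more n ih₀ ih₁ =>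
    rw [det_tridiagonal_succ_succ, ih₀, ih₁]
    simp only [Finset.prod_range_succ, hu]
    ring

theorem det_tridiagonal_eq_one_sub_prod_div_prod {K : Type*} [Field K] (y : ℕ → K)
    (hy : ∀ k, y k ≠ 1) (n : ℕ) :
    (tridiagonal n (fun i => (1 - y i * y (i + 1)) / ((1 - y i) * (1 - y (i + 1))))
      (fun i => -1 / (1 - y (i + 1))) (fun i => -y (i + 1) / (1 - y (i + 1)))).det =
      (1 - ∏ i ∈ Finset.range (n + 1), y i) / ∏ i ∈ Finset.range (n + 1), (1 - y i) := by
  have hne (k : ℕ) : 1 - y k ≠ 0 := sub_ne_zero.2 (hy k).symm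
  have hdiag : (fun i => (1 - y i * y (i + 1)) / ((1 - y i) * (1 - y (i + 1)))) =
      fun i => 1 / (1 - y i) + y (i + 1) / (1 - y (i + 1)) := by
    funext i
    field_simp [hne i, hne (i + 1)]
    ring
  have hsub (k : ℕ) : 1 / (1 - y k) - y k / (1 - y k) = 1 := by
    rw [← sub_div, div_self (hne k)]
  simp_rw [hdiag, neg_div]
  rw [det_tridiagonal_eq_prod_sub_prod (fun k => 1 / (1 - y k)) (fun k => y k / (1 - y k)) hsub,
    Finset.prod_div_distrib, Finset.prod_div_distrib, Finset.prod_const_one, sub_div]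

end Matrix

open Matrix

theorem det_tridiagonal_intersection_matrix_general (m : ℕ)
    (x : Fin (m + 1) → ℂ) (hx : ∀ i, x i ≠ 1) :
    Matrix.det (Matrix.of fun i j : Fin m =>
        if i = j then
          (1 - x i.castSucc * x i.succ) / ((1 - x i.castSucc) * (1 - x i.succ))
        else if (j : ℕ) = (i : ℕ) + 1 then -1 / (1 - x j.castSucc)
        else if (i : ℕ) = (j : ℕ) + 1 then -(x i.castSucc) / (1 - x i.castSucc)
        else 0)
      = (1 - ∏ i, x i) / ∏ i, (1 - x i) := by
  obtain ⟨y, hxy, hy⟩ : ∃ y : ℕ → ℂ, (∀ i : Fin (m + 1), x i = y i) ∧ ∀ k, y k ≠ 1 := by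
    refine ⟨fun k => if h : k < m + 1 then x ⟨k, h⟩ else 0, fun i => by simp [i.isLt], fun k => ?_⟩
    dsimp only
    split_ifs
    exacts [hx _, zero_ne_one]
  simp only [hxy, Fin.prod_univ_eq_prod_range (fun k => y k),
    Fin.prod_univ_eq_prod_range (fun k => 1 - y k)]
  refine (congrArg det ?_).trans (det_tridiagonal_eq_one_sub_prod_div_prod y hy m)
  ext i j
  simp only [of_apply, tridiagonal, Fin.ext_iff, Fin.val_castSucc, Fin.val_succ]
  split_ifs with hdiag hsup hsub
  · rfl
  · rw [hsup]
  · rw [hsub]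
  · rfl

theorem det_tridiagonal_intersection_matrix (m : ℕ) (hm : 1 ≤ m)
    (x : Fin (m + 1) → ℂ) (hx : ∀ i, x i ≠ 1) :
    Matrix.det (Matrix.of fun i j : Fin m =>
        if i = j then
          (1 - x i.castSucc * x i.succ) / ((1 - x i.castSucc) * (1 - x i.succ))
        else if (j : ℕ) = (i : ℕ) + 1 then -1 / (1 - x j.castSucc)
        else if (i : ℕ) = (j : ℕ) + 1 then -(x i.castSucc) / (1 - x i.castSucc)
        else 0)
      = (1 - ∏ i, x i) / ∏ i, (1 - x i) :=
  det_tridiagonal_intersection_matrix_general m x hx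
end

section
/- Let n ≥ 2 and let x_1, …, x_{n−1}, x_0, x_∞ be nonzero complex numbers with x_j ≠ 1 for j = 1, …, n−1. Then the determinant of the n×n matrix H₁₁ (defined in the context) equals (1 − x_1·x_2⋯x_{n−1}) / ((1−x_1)(1−x_2)⋯(1−x_{n−1})). -/
open Complex

/-- The intersection matrix H₁₁, with rows and columns indexed by the list
(2, …, n−1, 0, ∞): index a with a < n−2 corresponds to j = a+2, index n−2 to 0,
and index n−1 to ∞. -/
noncomputable def H11 (n : ℕ) (x : ℕ → ℂ) (x0 xinf : ℂ) : Matrix (Fin n) (Fin n) ℂ :=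
  Matrix.of fun a b =>
    if (a : ℕ) = n - 2 then
      if (b : ℕ) = n - 2 then -((x0 - 1) * (x0 - x 1)) / (x0 * (1 - x 1))
      else if (b : ℕ) = n - 1 then (x 1 - x0 * x 1 - x 1 * xinf + x0 * xinf) / (1 - x 1)
      else (1 - x0) / (1 - x 1)
    else if (a : ℕ) = n - 1 then
      if (b : ℕ) = n - 2 then (1 - xinf⁻¹ - x0⁻¹ + x0⁻¹ * x 1 * xinf⁻¹) / (1 - x 1)
      else if (b : ℕ) = n - 1 then -((xinf - 1) * (xinf - x 1)) / (xinf * (1 - x 1))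
      else (1 - xinf⁻¹) / (1 - x 1)
    else
      if (b : ℕ) = n - 2 then x 1 * (1 - x0⁻¹) / (1 - x 1)
      else if (b : ℕ) = n - 1 then x 1 * (1 - xinf) / (1 - x 1)
      else if (a : ℕ) < (b : ℕ) then x 1 / (1 - x 1)
      else if (b : ℕ) < (a : ℕ) then 1 / (1 - x 1)
      else (1 - x 1 * x ((a : ℕ) + 2)) / ((1 - x 1) * (1 - x ((a : ℕ) + 2)))

open Matrix

noncomputable def Ent (m : ℕ) (p : ℂ) (z : ℕ → ℂ) (x0 xf : ℂ) (a b : ℕ) : ℂ :=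
  if a = m then
    if b = m then -((x0 - 1) * (x0 - p)) / (x0 * (1 - p))
    else if b = m + 1 then (p - x0 * p - p * xf + x0 * xf) / (1 - p)
    else (1 - x0) / (1 - p)
  else if a = m + 1 then
    if b = m then (1 - xf⁻¹ - x0⁻¹ + x0⁻¹ * p * xf⁻¹) / (1 - p)
    else if b = m + 1 then -((xf - 1) * (xf - p)) / (xf * (1 - p))
    else (1 - xf⁻¹) / (1 - p)
  else
    if b = m then p * (1 - x0⁻¹) / (1 - p)
    else if b = m + 1 then p * (1 - xf) / (1 - p)
    else if a < b then p / (1 - p)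
    else if b < a then 1 / (1 - p)
    else (1 - p * z a) / ((1 - p) * (1 - z a))

noncomputable def Gm (m : ℕ) (p : ℂ) (z : ℕ → ℂ) (x0 xf : ℂ) :
    Matrix (Fin (m+2)) (Fin (m+2)) ℂ :=
  Matrix.of fun a b => Ent m p z x0 xf a b

noncomputable def Km (m : ℕ) (p : ℂ) (z : ℕ → ℂ) (x0 xf : ℂ) :
    Matrix (Fin (m+2)) (Fin (m+2)) ℂ :=
  Matrix.of fun a b => if (a : ℕ) = 0 ∧ (b : ℕ) = 0 then p / (1 - p) else Ent m p z x0 xf a b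

lemma succAbove_one_val {n : ℕ} (i : Fin (n+1)) :
    (((1 : Fin (n+2)).succAbove i : Fin (n+2)) : ℕ) = if (i:ℕ) = 0 then 0 else (i:ℕ)+1 := by
  by_cases h : (i:ℕ) = 0
  · have h1 : i.castSucc < (1 : Fin (n+2)) := by
      rw [Fin.lt_def]; simp [h]
    rw [Fin.succAbove, if_pos h1]; simp [h]
  · have h1 : ¬ i.castSucc < (1 : Fin (n+2)) := by
      rw [Fin.lt_def, Fin.val_castSucc, Fin.val_one]; omega
    rw [Fin.succAbove, if_neg h1]; simp [h]

set_option maxHeartbeats 2000000 in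
lemma subG (m : ℕ) (p : ℂ) (z : ℕ → ℂ) (x0 xf : ℂ) :
    (Gm (m+2) p z x0 xf).submatrix Fin.succ Fin.succ = Gm (m+1) p (fun i => z (i+1)) x0 xf := by
  ext i j
  simp only [Gm, Matrix.submatrix_apply, Matrix.of_apply, Fin.val_succ, Ent]
  split_ifs <;> first | contradiction | omega | rfl

set_option maxHeartbeats 8000000 in
lemma subK (m : ℕ) (p : ℂ) (z : ℕ → ℂ) (x0 xf : ℂ) :
    (Gm (m+2) p z x0 xf).submatrix ((1 : Fin (m+4)).succAbove) Fin.succ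
      = Km (m+1) p (fun i => z (i+1)) x0 xf := by
  ext i j
  simp only [Gm, Km, Matrix.submatrix_apply, Matrix.of_apply, Fin.val_succ, succAbove_one_val]
  unfold Ent
  split_ifs <;> first | contradiction | omega | rfl

lemma subKK (m : ℕ) (p : ℂ) (z : ℕ → ℂ) (x0 xf : ℂ) :
    (Km (m+2) p z x0 xf).submatrix ((1 : Fin (m+4)).succAbove) Fin.succ
      = Km (m+1) p (fun i => z (i+1)) x0 xf := by
  rw [← subK m p z x0 xf]
  ext i j
  simp only [Km, Gm, Matrix.submatrix_apply, Matrix.of_apply, Fin.val_succ]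
  rw [if_neg]
  push_neg
  intro _
  exact Nat.succ_ne_zero _

-- entry lemmas for Gm (m+2)
lemma G00 (m : ℕ) (p : ℂ) (z : ℕ → ℂ) (x0 xf : ℂ) :
    Gm (m+2) p z x0 xf 0 0 = (1 - p * z 0) / ((1 - p) * (1 - z 0)) := by
  simp only [Gm, Matrix.of_apply, Ent, Fin.val_zero]
  split_ifs <;> first | contradiction | omega | rfl

lemma G01 (m : ℕ) (p : ℂ) (z : ℕ → ℂ) (x0 xf : ℂ) :
    Gm (m+2) p z x0 xf 0 1 = p / (1 - p) := by
  simp only [Gm, Matrix.of_apply, Ent, Fin.val_zero, Fin.val_one]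
  split_ifs <;> first | contradiction | omega | rfl

lemma G10 (m : ℕ) (p : ℂ) (z : ℕ → ℂ) (x0 xf : ℂ) :
    Gm (m+2) p z x0 xf 1 0 = 1 / (1 - p) := by
  simp only [Gm, Matrix.of_apply, Ent, Fin.val_zero, Fin.val_one]
  split_ifs <;> first | contradiction | omega | rfl

lemma G11 (m : ℕ) (p : ℂ) (z : ℕ → ℂ) (x0 xf : ℂ) :
    Gm (m+2) p z x0 xf 1 1 = (1 - p * z 1) / ((1 - p) * (1 - z 1)) := by
  simp only [Gm, Matrix.of_apply, Ent, Fin.val_one]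
  split_ifs <;> first | contradiction | omega | rfl

lemma Gcol (m : ℕ) (p : ℂ) (z : ℕ → ℂ) (x0 xf : ℂ) (i : Fin (m+2)) :
    Gm (m+2) p z x0 xf i.succ.succ 0 = Gm (m+2) p z x0 xf i.succ.succ 1 := by
  simp only [Gm, Matrix.of_apply, Ent, Fin.val_succ, Fin.val_zero, Fin.val_one]
  split_ifs <;> first | contradiction | omega | rfl

lemma K00 (m : ℕ) (p : ℂ) (z : ℕ → ℂ) (x0 xf : ℂ) :
    Km (m+2) p z x0 xf 0 0 = p / (1 - p) := by
  simp [Km]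

lemma Kne (m : ℕ) (p : ℂ) (z : ℕ → ℂ) (x0 xf : ℂ) (a b : Fin (m+4))
    (h : ¬((a:ℕ) = 0 ∧ (b:ℕ) = 0)) :
    Km (m+2) p z x0 xf a b = Gm (m+2) p z x0 xf a b := by
  simp only [Km, Gm, Matrix.of_apply]
  rw [if_neg h]

lemma Kcol (m : ℕ) (p : ℂ) (z : ℕ → ℂ) (x0 xf : ℂ) (i : Fin (m+2)) :
    Km (m+2) p z x0 xf i.succ.succ 0 = Km (m+2) p z x0 xf i.succ.succ 1 := by
  rw [Kne _ _ _ _ _ _ _ (by simp [Fin.val_succ]), Kne _ _ _ _ _ _ _ (by simp [Fin.val_succ]), Gcol]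
lemma K01 (m : ℕ) (p : ℂ) (z : ℕ → ℂ) (x0 xf : ℂ) :
    Km (m+2) p z x0 xf 0 1 = p / (1 - p) := by
  rw [Kne _ _ _ _ _ _ _ (by simp), G01]

lemma K10 (m : ℕ) (p : ℂ) (z : ℕ → ℂ) (x0 xf : ℂ) :
    Km (m+2) p z x0 xf 1 0 = 1 / (1 - p) := by
  rw [Kne _ _ _ _ _ _ _ (by simp), G10]

lemma K11 (m : ℕ) (p : ℂ) (z : ℕ → ℂ) (x0 xf : ℂ) :
    Km (m+2) p z x0 xf 1 1 = (1 - p * z 1) / ((1 - p) * (1 - z 1)) := by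
  rw [Kne _ _ _ _ _ _ _ (by simp), G11]

lemma recG (m : ℕ) (p : ℂ) (z : ℕ → ℂ) (x0 xf : ℂ) (hp : p ≠ 1) (hz0 : z 0 ≠ 1)
    (hz1 : z 1 ≠ 1) :
    det (Gm (m+2) p z x0 xf)
      = (1 / (1 - z 0)) * det (Gm (m+1) p (fun i => z (i+1)) x0 xf)
        + (z 1 / (1 - z 1)) * det (Km (m+1) p (fun i => z (i+1)) x0 xf) := by
  have hp' : (1 - p) ≠ 0 := sub_ne_zero.mpr (Ne.symm hp)
  have hz0' : (1 - z 0) ≠ 0 := sub_ne_zero.mpr (Ne.symm hz0)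
  have hz1' : (1 - z 1) ≠ 0 := sub_ne_zero.mpr (Ne.symm hz1)
  have h01 : (0 : Fin (m+4)) ≠ 1 := by
    intro h
    exact absurd (congrArg Fin.val h) (by simp)
  rw [← Matrix.det_updateCol_add_smul_self (Gm (m+2) p z x0 xf) h01 (-1 : ℂ)]
  rw [Matrix.det_succ_column_zero, Fin.sum_univ_succ, Fin.sum_univ_succ]
  have hBsub : ∀ r : Fin (m+3) → Fin (m+4),
      ((Gm (m+2) p z x0 xf).updateCol 0
        (fun k => Gm (m+2) p z x0 xf k 0 + (-1 : ℂ) • Gm (m+2) p z x0 xf k 1)).submatrix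
          r Fin.succ
        = (Gm (m+2) p z x0 xf).submatrix r Fin.succ := by
    intro r; ext i j
    simp only [Matrix.submatrix_apply]
    rw [Matrix.updateCol_ne (Fin.succ_ne_zero j)]
  have hB0 : ((Gm (m+2) p z x0 xf).updateCol 0
      (fun k => Gm (m+2) p z x0 xf k 0 + (-1 : ℂ) • Gm (m+2) p z x0 xf k 1)) 0 0
      = 1 / (1 - z 0) := by
    rw [Matrix.updateCol_self, G00, G01]
    rw [smul_eq_mul]
    field_simp
    ring
  have hB1 : ((Gm (m+2) p z x0 xf).updateCol 0
      (fun k => Gm (m+2) p z x0 xf k 0 + (-1 : ℂ) • Gm (m+2) p z x0 xf k 1)) 1 0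
      = -(z 1 / (1 - z 1)) := by
    rw [Matrix.updateCol_self, G10, G11]
    rw [smul_eq_mul]
    field_simp
    ring
  have hBs : ∀ i : Fin (m+2), ((Gm (m+2) p z x0 xf).updateCol 0
      (fun k => Gm (m+2) p z x0 xf k 0 + (-1 : ℂ) • Gm (m+2) p z x0 xf k 1)) i.succ.succ 0
      = 0 := by
    intro i
    rw [Matrix.updateCol_self, Gcol]
    simp
  simp only [Fin.succ_zero_eq_one, Fin.val_zero, Fin.val_one, pow_zero, pow_one,
    Fin.succAbove_zero, hBsub, hB0, hB1, hBs, zero_mul, mul_zero, neg_mul, one_mul,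
    Finset.sum_const_zero, add_zero, neg_neg, subG, subK]
  try ring

lemma recK (m : ℕ) (p : ℂ) (z : ℕ → ℂ) (x0 xf : ℂ) (hp : p ≠ 1) (hz1 : z 1 ≠ 1) :
    det (Km (m+2) p z x0 xf)
      = (z 1 / (1 - z 1)) * det (Km (m+1) p (fun i => z (i+1)) x0 xf) := by
  have hp' : (1 - p) ≠ 0 := sub_ne_zero.mpr (Ne.symm hp)
  have hz1' : (1 - z 1) ≠ 0 := sub_ne_zero.mpr (Ne.symm hz1)
  have h01 : (0 : Fin (m+4)) ≠ 1 := by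
    intro h
    exact absurd (congrArg Fin.val h) (by simp)
  rw [← Matrix.det_updateCol_add_smul_self (Km (m+2) p z x0 xf) h01 (-1 : ℂ)]
  rw [Matrix.det_succ_column_zero, Fin.sum_univ_succ, Fin.sum_univ_succ]
  have hBsub : ∀ r : Fin (m+3) → Fin (m+4),
      ((Km (m+2) p z x0 xf).updateCol 0
        (fun k => Km (m+2) p z x0 xf k 0 + (-1 : ℂ) • Km (m+2) p z x0 xf k 1)).submatrix
          r Fin.succ
        = (Km (m+2) p z x0 xf).submatrix r Fin.succ := by
    intro r; ext i j
    simp only [Matrix.submatrix_apply]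
    rw [Matrix.updateCol_ne (Fin.succ_ne_zero j)]
  have hB0 : ((Km (m+2) p z x0 xf).updateCol 0
      (fun k => Km (m+2) p z x0 xf k 0 + (-1 : ℂ) • Km (m+2) p z x0 xf k 1)) 0 0
      = 0 := by
    rw [Matrix.updateCol_self, K00, K01]
    simp
  have hB1 : ((Km (m+2) p z x0 xf).updateCol 0
      (fun k => Km (m+2) p z x0 xf k 0 + (-1 : ℂ) • Km (m+2) p z x0 xf k 1)) 1 0
      = -(z 1 / (1 - z 1)) := by
    rw [Matrix.updateCol_self, K10, K11]
    rw [smul_eq_mul]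
    field_simp
    ring
  have hBs : ∀ i : Fin (m+2), ((Km (m+2) p z x0 xf).updateCol 0
      (fun k => Km (m+2) p z x0 xf k 0 + (-1 : ℂ) • Km (m+2) p z x0 xf k 1)) i.succ.succ 0
      = 0 := by
    intro i
    rw [Matrix.updateCol_self, Kcol]
    simp
  simp only [Fin.succ_zero_eq_one, Fin.val_zero, Fin.val_one, pow_zero, pow_one,
    Fin.succAbove_zero, hBsub, hB0, hB1, hBs, zero_mul, mul_zero, neg_mul, one_mul,
    Finset.sum_const_zero, add_zero, zero_add, neg_neg, subKK]
  try ring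

set_option maxHeartbeats 1000000 in
lemma detG0 (p : ℂ) (z : ℕ → ℂ) (x0 xf : ℂ) (hp : p ≠ 1) (hx0 : x0 ≠ 0) (hxf : xf ≠ 0) :
    det (Gm 0 p z x0 xf) = 1 := by
  obtain ⟨q, hq, rfl⟩ : ∃ q, q ≠ 0 ∧ p = 1 - q :=
    ⟨1 - p, sub_ne_zero.mpr (Ne.symm hp), by ring⟩
  rw [Matrix.det_fin_two]
  have e00 : Gm 0 (1-q) z x0 xf 0 0 = -((x0 - 1) * (x0 - (1-q))) / (x0 * q) := by
    rw [show Gm 0 (1-q) z x0 xf 0 0 = -((x0 - 1) * (x0 - (1-q))) / (x0 * (1 - (1-q))) from rfl]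
    norm_num
  have e01 : Gm 0 (1-q) z x0 xf 0 1 = ((1-q) - x0 * (1-q) - (1-q) * xf + x0 * xf) / q := by
    rw [show Gm 0 (1-q) z x0 xf 0 1 = ((1-q) - x0 * (1-q) - (1-q) * xf + x0 * xf) / (1 - (1-q)) from rfl]
    norm_num
  have e10 : Gm 0 (1-q) z x0 xf 1 0 = (x0 * xf - x0 - xf + (1-q)) / (x0 * (xf * q)) := by
    rw [show Gm 0 (1-q) z x0 xf 1 0 = (1 - xf⁻¹ - x0⁻¹ + x0⁻¹ * (1-q) * xf⁻¹) / (1 - (1-q)) from rfl]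
    rw [show (1:ℂ) - (1-q) = q from by ring]
    field_simp
  have e11 : Gm 0 (1-q) z x0 xf 1 1 = -((xf - 1) * (xf - (1-q))) / (xf * q) := by
    rw [show Gm 0 (1-q) z x0 xf 1 1 = -((xf - 1) * (xf - (1-q))) / (xf * (1 - (1-q))) from rfl]
    norm_num
  rw [e00, e01, e10, e11]
  have hb : (x0 * q) * (xf * q) ≠ 0 := by
    apply mul_ne_zero <;> exact mul_ne_zero (by assumption) (by assumption)
  have hd : q * (x0 * (xf * q)) ≠ 0 :=
    mul_ne_zero hq (mul_ne_zero hx0 (mul_ne_zero hxf hq))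
  rw [div_mul_div_comm, div_mul_div_comm, div_sub_div _ _ hb hd,
    div_eq_one_iff_eq (mul_ne_zero hb hd)]
  ring

set_option maxHeartbeats 1000000 in
lemma detG1 (p : ℂ) (z : ℕ → ℂ) (x0 xf : ℂ) (hp : p ≠ 1) (hz0 : z 0 ≠ 1)
    (hx0 : x0 ≠ 0) (hxf : xf ≠ 0) :
    det (Gm 1 p z x0 xf) = (1 - p * z 0) / ((1 - p) * (1 - z 0)) := by
  obtain ⟨q, hq, rfl⟩ : ∃ q, q ≠ 0 ∧ p = 1 - q :=
    ⟨1 - p, sub_ne_zero.mpr (Ne.symm hp), by ring⟩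
  obtain ⟨w, hw, hzw⟩ : ∃ w, w ≠ 0 ∧ z 0 = 1 - w :=
    ⟨1 - z 0, sub_ne_zero.mpr (Ne.symm hz0), by ring⟩
  have hD : x0 * xf * (q * w) ≠ 0 :=
    mul_ne_zero (mul_ne_zero hx0 hxf) (mul_ne_zero hq hw)
  rw [Matrix.det_fin_three]
  have e00 : Gm 1 (1-q) z x0 xf 0 0
      = ((1 - (1-q) * (1-w)) * (x0 * xf)) / (x0 * xf * (q * w)) := by
    rw [show Gm 1 (1-q) z x0 xf 0 0
      = (1 - (1-q) * z 0) / ((1 - (1-q)) * (1 - z 0)) from rfl, hzw]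
    rw [div_eq_div_iff (by rw [sub_sub_cancel, sub_sub_cancel]; exact mul_ne_zero hq hw) hD]
    ring
  have e01 : Gm 1 (1-q) z x0 xf 0 1
      = ((1-q) * (x0 - 1) * (xf * w)) / (x0 * xf * (q * w)) := by
    rw [show Gm 1 (1-q) z x0 xf 0 1 = (1-q) * (1 - x0⁻¹) / (1 - (1-q)) from rfl]
    field_simp
    ring
  have e02 : Gm 1 (1-q) z x0 xf 0 2
      = ((1-q) * (1 - xf) * (x0 * xf * w)) / (x0 * xf * (q * w)) := by
    rw [show Gm 1 (1-q) z x0 xf 0 2 = (1-q) * (1 - xf) / (1 - (1-q)) from rfl]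
    field_simp
    ring
  have e10 : Gm 1 (1-q) z x0 xf 1 0
      = ((1 - x0) * (x0 * xf * w)) / (x0 * xf * (q * w)) := by
    rw [show Gm 1 (1-q) z x0 xf 1 0 = (1 - x0) / (1 - (1-q)) from rfl]
    field_simp
    ring
  have e11 : Gm 1 (1-q) z x0 xf 1 1
      = (-((x0 - 1) * (x0 - (1-q))) * (xf * w)) / (x0 * xf * (q * w)) := by
    rw [show Gm 1 (1-q) z x0 xf 1 1
      = -((x0 - 1) * (x0 - (1-q))) / (x0 * (1 - (1-q))) from rfl]
    field_simp
    ring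
  have e12 : Gm 1 (1-q) z x0 xf 1 2
      = (((1-q) - x0 * (1-q) - (1-q) * xf + x0 * xf) * (x0 * xf * w)) / (x0 * xf * (q * w)) := by
    rw [show Gm 1 (1-q) z x0 xf 1 2
      = ((1-q) - x0 * (1-q) - (1-q) * xf + x0 * xf) / (1 - (1-q)) from rfl]
    field_simp
    ring
  have e20 : Gm 1 (1-q) z x0 xf 2 0
      = ((xf - 1) * (x0 * w)) / (x0 * xf * (q * w)) := by
    rw [show Gm 1 (1-q) z x0 xf 2 0 = (1 - xf⁻¹) / (1 - (1-q)) from rfl]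
    field_simp
    ring
  have e21 : Gm 1 (1-q) z x0 xf 2 1
      = ((x0 * xf - x0 - xf + (1-q)) * w) / (x0 * xf * (q * w)) := by
    rw [show Gm 1 (1-q) z x0 xf 2 1
      = (1 - xf⁻¹ - x0⁻¹ + x0⁻¹ * (1-q) * xf⁻¹) / (1 - (1-q)) from rfl]
    field_simp
    ring
  have e22 : Gm 1 (1-q) z x0 xf 2 2
      = (-((xf - 1) * (xf - (1-q))) * (x0 * w)) / (x0 * xf * (q * w)) := by
    rw [show Gm 1 (1-q) z x0 xf 2 2
      = -((xf - 1) * (xf - (1-q))) / (xf * (1 - (1-q))) from rfl]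
    field_simp
    ring
  rw [e00, e01, e02, e10, e11, e12, e20, e21, e22, hzw]
  rw [show (1:ℂ) - (1-q) = q from by ring, show (1:ℂ) - (1-w) = w from by ring]
  simp only [div_mul_div_comm, div_sub_div_same, ← add_div]
  rw [div_eq_div_iff (mul_ne_zero (mul_ne_zero hD hD) hD) (mul_ne_zero hq hw)]
  ring

set_option maxHeartbeats 1000000 in
lemma detK1 (p : ℂ) (z : ℕ → ℂ) (x0 xf : ℂ) (hp : p ≠ 1) (hx0 : x0 ≠ 0) (hxf : xf ≠ 0) :
    det (Km 1 p z x0 xf) = p / (1 - p) := by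
  obtain ⟨q, hq, rfl⟩ : ∃ q, q ≠ 0 ∧ p = 1 - q :=
    ⟨1 - p, sub_ne_zero.mpr (Ne.symm hp), by ring⟩
  have hD : x0 * xf * q ≠ 0 := mul_ne_zero (mul_ne_zero hx0 hxf) hq
  rw [Matrix.det_fin_three]
  have e00 : Km 1 (1-q) z x0 xf 0 0 = ((1-q) * (x0 * xf)) / (x0 * xf * q) := by
    rw [show Km 1 (1-q) z x0 xf 0 0 = (1-q) / (1 - (1-q)) from rfl]
    field_simp
    ring
  have e01 : Km 1 (1-q) z x0 xf 0 1 = ((1-q) * (x0 - 1) * xf) / (x0 * xf * q) := by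
    rw [show Km 1 (1-q) z x0 xf 0 1 = (1-q) * (1 - x0⁻¹) / (1 - (1-q)) from rfl]
    field_simp
    ring
  have e02 : Km 1 (1-q) z x0 xf 0 2 = ((1-q) * (1 - xf) * (x0 * xf)) / (x0 * xf * q) := by
    rw [show Km 1 (1-q) z x0 xf 0 2 = (1-q) * (1 - xf) / (1 - (1-q)) from rfl]
    field_simp
    ring
  have e10 : Km 1 (1-q) z x0 xf 1 0 = ((1 - x0) * (x0 * xf)) / (x0 * xf * q) := by
    rw [show Km 1 (1-q) z x0 xf 1 0 = (1 - x0) / (1 - (1-q)) from rfl]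
    field_simp
    ring
  have e11 : Km 1 (1-q) z x0 xf 1 1
      = (-((x0 - 1) * (x0 - (1-q))) * xf) / (x0 * xf * q) := by
    rw [show Km 1 (1-q) z x0 xf 1 1
      = -((x0 - 1) * (x0 - (1-q))) / (x0 * (1 - (1-q))) from rfl]
    field_simp
    ring
  have e12 : Km 1 (1-q) z x0 xf 1 2
      = (((1-q) - x0 * (1-q) - (1-q) * xf + x0 * xf) * (x0 * xf)) / (x0 * xf * q) := by
    rw [show Km 1 (1-q) z x0 xf 1 2
      = ((1-q) - x0 * (1-q) - (1-q) * xf + x0 * xf) / (1 - (1-q)) from rfl]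
    field_simp
    ring
  have e20 : Km 1 (1-q) z x0 xf 2 0 = ((xf - 1) * x0) / (x0 * xf * q) := by
    rw [show Km 1 (1-q) z x0 xf 2 0 = (1 - xf⁻¹) / (1 - (1-q)) from rfl]
    field_simp
    ring
  have e21 : Km 1 (1-q) z x0 xf 2 1 = (x0 * xf - x0 - xf + (1-q)) / (x0 * xf * q) := by
    rw [show Km 1 (1-q) z x0 xf 2 1
      = (1 - xf⁻¹ - x0⁻¹ + x0⁻¹ * (1-q) * xf⁻¹) / (1 - (1-q)) from rfl]
    field_simp
    ring
  have e22 : Km 1 (1-q) z x0 xf 2 2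
      = (-((xf - 1) * (xf - (1-q))) * x0) / (x0 * xf * q) := by
    rw [show Km 1 (1-q) z x0 xf 2 2
      = -((xf - 1) * (xf - (1-q))) / (xf * (1 - (1-q))) from rfl]
    field_simp
    ring
  rw [e00, e01, e02, e10, e11, e12, e20, e21, e22]
  rw [show (1:ℂ) - (1-q) = q from by ring]
  simp only [div_mul_div_comm, div_sub_div_same, ← add_div]
  rw [div_eq_div_iff (mul_ne_zero (mul_ne_zero hD hD) hD) hq]
  ring

lemma detK (p : ℂ) (x0 xf : ℂ) (hp1 : p ≠ 1) (hx0 : x0 ≠ 0) (hxf : xf ≠ 0) :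
    ∀ (m : ℕ) (z : ℕ → ℂ), (∀ i, z i ≠ 1) →
      det (Km (m+1) p z x0 xf)
        = p / (1 - p) * ∏ i ∈ Finset.range m, (z (i+1) / (1 - z (i+1))) := by
  intro m
  induction m with
  | zero =>
    intro z hz
    simpa using detK1 p z x0 xf hp1 hx0 hxf
  | succ m ih =>
    intro z hz
    rw [recK m p z x0 xf hp1 (hz 1), ih (fun i => z (i+1)) (fun i => hz (i+1))]
    rw [Finset.prod_range_succ']
    have : ∀ i ∈ Finset.range m, ((fun i => z (i+1)) (i+1) / (1 - (fun i => z (i+1)) (i+1)))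
        = (fun i => z (i+1+1) / (1 - z (i+1+1))) i := fun i _ => rfl
    rw [Finset.prod_congr rfl this]
    ring

lemma detG (p : ℂ) (x0 xf : ℂ) (hp1 : p ≠ 1) (hx0 : x0 ≠ 0) (hxf : xf ≠ 0) :
    ∀ (m : ℕ) (z : ℕ → ℂ), (∀ i, z i ≠ 1) →
      det (Gm m p z x0 xf)
        = (1 - p * ∏ i ∈ Finset.range m, z i)
            / ((1 - p) * ∏ i ∈ Finset.range m, (1 - z i)) := by
  have hp' : (1 - p) ≠ 0 := sub_ne_zero.mpr (Ne.symm hp1)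
  intro m
  induction m with
  | zero =>
    intro z hz
    rw [detG0 p z x0 xf hp1 hx0 hxf]
    simp [div_self hp']
  | succ m ih =>
    intro z hz
    match m, ih with
    | 0, _ =>
      simpa using detG1 p z x0 xf hp1 (hz 0) hx0 hxf
    | (m+1), ih =>
      have hz' : ∀ i, (fun i => z (i+1)) i ≠ 1 := fun i => hz (i+1)
      rw [recG m p z x0 xf hp1 (hz 0) (hz 1), ih (fun i => z (i+1)) hz',
        detK p x0 xf hp1 hx0 hxf m (fun i => z (i+1)) hz']
      have hzz : ∀ i, (1 - z i) ≠ 0 := fun i => sub_ne_zero.mpr (Ne.symm (hz i))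
      have hQ2 : (∏ i ∈ Finset.range m, (1 - z (i+2))) ≠ 0 :=
        Finset.prod_ne_zero_iff.mpr (fun i _ => hzz (i+2))
      have e1 : ∏ i ∈ Finset.range (m+1), (fun i => z (i+1)) i
          = z 1 * ∏ i ∈ Finset.range m, z (i+2) := by
        rw [Finset.prod_range_succ', mul_comm]
      have e2 : ∏ i ∈ Finset.range (m+1), (1 - (fun i => z (i+1)) i)
          = (1 - z 1) * ∏ i ∈ Finset.range m, (1 - z (i+2)) := by
        rw [Finset.prod_range_succ', mul_comm]
      have e3 : ∏ i ∈ Finset.range m, ((fun i => z (i+1)) (i+1) / (1 - (fun i => z (i+1)) (i+1)))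
          = (∏ i ∈ Finset.range m, z (i+2)) / (∏ i ∈ Finset.range m, (1 - z (i+2))) := by
        rw [← Finset.prod_div_distrib]
      have e4 : ∏ i ∈ Finset.range (m+2), z i
          = z 0 * (z 1 * ∏ i ∈ Finset.range m, z (i+2)) := by
        rw [Finset.prod_range_succ', Finset.prod_range_succ']
        rw [Finset.prod_congr rfl
          (fun k _ => rfl : ∀ k ∈ Finset.range m, z (k+1+1) = z (k+2))]
        rw [show z (0+1) = z 1 from rfl]
        ring
      have e5 : ∏ i ∈ Finset.range (m+2), (1 - z i)
          = (1 - z 0) * ((1 - z 1) * ∏ i ∈ Finset.range m, (1 - z (i+2))) := by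
        rw [Finset.prod_range_succ', Finset.prod_range_succ']
        rw [Finset.prod_congr rfl
          (fun k _ => rfl : ∀ k ∈ Finset.range m, (1 - z (k+1+1)) = (1 - z (k+2)))]
        rw [show z (0+1) = z 1 from rfl]
        ring
      rw [e1, e2, e3, e4, e5]
      rw [eq_div_iff (mul_ne_zero hp' (mul_ne_zero (hzz 0) (mul_ne_zero (hzz 1) hQ2)))]
      field_simp [hp', hQ2, hzz 0, hzz 1]
      ring

lemma prodIcc (f : ℕ → ℂ) : ∀ m : ℕ,
    ∏ j ∈ Finset.Icc 1 (m+1), f j = f 1 * ∏ i ∈ Finset.range m, f (i+2)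
  | 0 => by simp
  | (m+1) => by
    rw [Finset.prod_Icc_succ_top (by omega : 1 ≤ m+1+1), prodIcc f m,
      Finset.prod_range_succ, mul_assoc]

set_option maxHeartbeats 2000000 in
lemma bridge (m : ℕ) (x : ℕ → ℂ) (x0 xf : ℂ) (z : ℕ → ℂ)
    (hzx : ∀ i, i < m → z i = x (i+2)) :
    H11 (m+2) x x0 xf = Gm m (x 1) z x0 xf := by
  ext a b
  simp only [H11, Gm, Ent, Matrix.of_apply, show m+2-2 = m from rfl,
    show m+2-1 = m+1 from rfl]
  split_ifs <;> first | contradiction | omega | rfl | (rw [hzx _ (by omega)])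

theorem det_H11 (n : ℕ) (hn : 2 ≤ n) (x : ℕ → ℂ) (x0 xinf : ℂ)
    (hx0 : x0 ≠ 0) (hxinf : xinf ≠ 0)
    (hx : ∀ j, 1 ≤ j → j ≤ n - 1 → x j ≠ 0 ∧ x j ≠ 1) :
    Matrix.det (H11 n x x0 xinf) =
      (1 - ∏ j ∈ Finset.Icc 1 (n - 1), x j) / ∏ j ∈ Finset.Icc 1 (n - 1), (1 - x j) := by
  obtain ⟨m, rfl⟩ : ∃ m, n = m + 2 := ⟨n - 2, by omega⟩
  have hx1 : x 1 ≠ 0 ∧ x 1 ≠ 1 := hx 1 le_rfl (by omega)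
  set z : ℕ → ℂ := fun i => if i < m then x (i+2) else 2 with hz
  have hzx : ∀ i, i < m → z i = x (i+2) := by
    intro i hi
    simp only [hz]
    rw [if_pos hi]
  have hz1 : ∀ i, z i ≠ 1 := by
    intro i
    by_cases h : i < m
    · rw [hzx i h]
      exact (hx (i+2) (by omega) (by omega)).2
    · simp only [hz]
      rw [if_neg h]
      norm_num
  rw [bridge m x x0 xinf z hzx]
  rw [detG (x 1) x0 xinf hx1.2 hx0 hxinf m z hz1]
  have h1 : ∏ j ∈ Finset.Icc 1 (m+2-1), x j = x 1 * ∏ i ∈ Finset.range m, z i := by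
    rw [show m+2-1 = m+1 from rfl, prodIcc x m]
    congr 1
    exact Finset.prod_congr rfl fun i hi => (hzx i (Finset.mem_range.mp hi)).symm
  have h2 : ∏ j ∈ Finset.Icc 1 (m+2-1), (1 - x j)
      = (1 - x 1) * ∏ i ∈ Finset.range m, (1 - z i) := by
    rw [show m+2-1 = m+1 from rfl, prodIcc (fun j => 1 - x j) m]
    congr 1
    exact Finset.prod_congr rfl fun i hi => by rw [hzx i (Finset.mem_range.mp hi)]
  rw [h1, h2]
end

section
/- Let n ≥ 2, let t_1, …, t_n ∈ ℂ with ϑ₁(t_1 − t_l) ≠ 0 for l = 2, …, n, let c_0 ∈ ℂ, and let c_1, …, c_{n−1} ∈ ℂ with c_1 ∉ {0, 1, −1} and c_j ≠ 0 for j = 2, …, n−1; set c_n = −(c_1 + ⋯ + c_{n−1}). Assume ϑ₁′(0) ≠ 0 and put β = 2πi·c_0 + ∑_{l=2}^{n} c_l·ρ(t_1−t_l) and Γ = c_1·ϑ₁′′′(0)/ϑ₁′(0) + ∑_{l=2}^{n} c_l·ρ′(t_1−t_l), where ρ′ is the derivative of ρ and ϑ₁′′′(0) is the third derivative of ϑ₁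 at 0. Define the n×n complex matrix C with rows and columns indexed by 0, 1, …, n−1 by: C_{00} = 0; C_{01} = −2πi/(c_1+1); C_{0k} = 0 for 2 ≤ k ≤ n−1; C_{10} = −2πi/(c_1−1); C_{11} = (2πi/((c_1−1)(c_1+1)))·(β²/c_1 − Γ); C_{1k} = −(2πi/(c_1(c_1−1)))·(β + c_1·ρ(t_1−t_k)) for 2 ≤ k ≤ n−1; C_{j0} = 0 and C_{j1} = −(2πi/(c_1(c_1+1)))·(β + c_1·ρ(t_1−t_j)) for 2 ≤ j ≤ n−1; and C_{jk} = 2πi·(1/c_1 + δ_{jk}/c_j) for 2 ≤ j, k ≤ n−1. Then det C = (2πi)ⁿ·c_n / ((c_1−1)(c_1+1)·c_1·c_2⋯c_{n−1}). (C is the cohomology intersection matrix (I_c([φ_{1j}],[φ_{1k}^∨]))_{j,k=0,…,n−1} for λ = 0.) -/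
open Complex Filter

lemma det_aux {m : ℕ} (a b : ℂ) (A : Matrix (Fin m) (Fin m) ℂ)
    (M : Matrix (Fin (m + 2)) (Fin (m + 2)) ℂ)
    (hM0 : ∀ j, M 0 j = if (j : ℕ) = 1 then a else 0)
    (hM10 : M 1 0 = b)
    (hMj0 : ∀ i : Fin m, M i.succ.succ 0 = 0)
    (hA : ∀ i j : Fin m, M i.succ.succ j.succ.succ = A i j) :
    M.det = -(a * b) * A.det := by
  have hsa : ∀ j : Fin m, (1 : Fin (m + 2)).succAbove j.succ = j.succ.succ := by
    intro j
    have h : (1 : Fin (m + 2)) ≤ j.succ.castSucc := by simp [Fin.le_def]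
    rw [Fin.succAbove_of_le_castSucc _ _ h]
  have hsa0 : (1 : Fin (m + 2)).succAbove 0 = 0 := by
    rw [Fin.succAbove_of_castSucc_lt] <;> simp [Fin.lt_def]
  rw [Matrix.det_succ_row_zero]
  rw [Finset.sum_eq_single (1 : Fin (m + 2))]
  · have h01 : M 0 1 = a := by rw [hM0]; simp
    rw [h01]
    have hdet : (M.submatrix Fin.succ (1 : Fin (m + 2)).succAbove).det = b * A.det := by
      rw [Matrix.det_succ_column_zero]
      rw [Finset.sum_eq_single (0 : Fin (m + 1))]
      · have hP : ((M.submatrix Fin.succ (1 : Fin (m + 2)).succAbove).submatrix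
            (0 : Fin (m + 1)).succAbove Fin.succ) = A := by
          ext i j
          simp only [Matrix.submatrix_apply, Fin.succAbove_zero, hsa]
          exact hA i j
        rw [hP]
        simp [hsa0, hM10]
      · intro i _ hi
        obtain ⟨i', rfl⟩ := Fin.exists_succ_eq.mpr hi
        simp [Matrix.submatrix_apply, hsa0, hMj0]
      · simp
    rw [hdet]
    have h1 : ((1 : Fin (m + 2)) : ℕ) = 1 := rfl
    rw [h1]
    ring
  · intro j _ hj
    rw [hM0]
    have : (j : ℕ) ≠ 1 := fun h => hj (Fin.ext (by simp [h]))
    simp [this]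
  · simp

lemma det_diag_add_const {m : ℕ} (q c1 : ℂ) (d : Fin m → ℂ) (hd : ∀ i, d i ≠ 0)
    (hc1 : c1 ≠ 0) :
    (Matrix.of fun i j : Fin m => q * (1 / c1 + if i = j then 1 / d i else 0)).det
      = q ^ m * (∏ i, d i)⁻¹ * (1 + (∑ i, d i) / c1) := by
  have key : (Matrix.of fun i j : Fin m => q * (1 / c1 + if i = j then 1 / d i else 0))
      = (Matrix.diagonal fun i => q / d i) *
        (1 + Matrix.replicateCol Unit (fun i => d i / c1) * Matrix.replicateRow Unit (1 : Fin m → ℂ)) := by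
    ext i j
    rw [Matrix.diagonal_mul]
    simp only [Matrix.of_apply, Matrix.add_apply, Matrix.one_apply, Matrix.mul_apply,
      Matrix.replicateCol_apply, Matrix.replicateRow_apply, Finset.sum_const, Finset.card_univ,
      Fintype.card_unit, one_smul, Pi.one_apply, mul_one]
    rcases eq_or_ne i j with rfl | hij
    · simp only [if_pos rfl]
      field_simp [hd i]
      simp only [if_true, mul_one]
      linear_combination (q * c1) * mul_inv_cancel₀ (hd i)
    · simp only [if_neg hij]
      field_simp [hd i]
      ring
  rw [key, Matrix.det_mul, Matrix.det_diagonal, Matrix.det_one_add_replicateCol_mul_replicateRow]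
  simp only [dotProduct, Pi.one_apply, one_mul]
  rw [Finset.prod_div_distrib, Finset.prod_const, Finset.card_univ, Fintype.card_fin,
    div_eq_mul_inv, ← Finset.sum_div]


theorem det_cohomology_intersection_matrix_lambda_zero (τ : ℂ) (hτ : 0 < τ.im)
    (n : ℕ) (hn : 2 ≤ n) (t : ℕ → ℂ) (c0 : ℂ) (c : ℕ → ℂ)
    (ht : ∀ l, 2 ≤ l → l ≤ n → theta τ (t 1 - t l) ≠ 0)
    (hc1 : c 1 ≠ 0) (hc1' : c 1 ≠ 1) (hc1'' : c 1 ≠ -1)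
    (hcj : ∀ j, 2 ≤ j → j ≤ n - 1 → c j ≠ 0)
    (hθ : theta' τ 0 ≠ 0) :
    let cn : ℂ := -(∑ j ∈ Finset.Icc 1 (n - 1), c j)
    let cc : ℕ → ℂ := fun j => if j = n then cn else c j
    let β : ℂ := 2 * (Real.pi : ℂ) * Complex.I * c0 +
      ∑ l ∈ Finset.Icc 2 n, cc l * rho τ (t 1 - t l)
    let Γ : ℂ := c 1 * iteratedDeriv 3 (theta τ) 0 / theta' τ 0 +
      ∑ l ∈ Finset.Icc 2 n, cc l * deriv (rho τ) (t 1 - t l)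
    Matrix.det (Matrix.of fun a b : Fin n =>
        if (a : ℕ) = 0 then
          (if (b : ℕ) = 1 then -(2 * (Real.pi : ℂ) * Complex.I) / (c 1 + 1) else 0)
        else if (a : ℕ) = 1 then
          (if (b : ℕ) = 0 then -(2 * (Real.pi : ℂ) * Complex.I) / (c 1 - 1)
           else if (b : ℕ) = 1 then
             (2 * (Real.pi : ℂ) * Complex.I / ((c 1 - 1) * (c 1 + 1))) * (β ^ 2 / c 1 - Γ)
           else -(2 * (Real.pi : ℂ) * Complex.I / (c 1 * (c 1 - 1))) *
             (β + c 1 * rho τ (t 1 - t (b : ℕ))))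
        else
          (if (b : ℕ) = 0 then 0
           else if (b : ℕ) = 1 then
             -(2 * (Real.pi : ℂ) * Complex.I / (c 1 * (c 1 + 1))) *
               (β + c 1 * rho τ (t 1 - t (a : ℕ)))
           else 2 * (Real.pi : ℂ) * Complex.I *
             (1 / c 1 + (if a = b then 1 / c (a : ℕ) else 0)))) =
      (2 * (Real.pi : ℂ) * Complex.I) ^ n * cn /
        ((c 1 - 1) * (c 1 + 1) * ∏ j ∈ Finset.Icc 1 (n - 1), c j) := by
  obtain ⟨m, rfl⟩ : ∃ m, n = m + 2 := ⟨n - 2, by omega⟩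
  intro cn cc β Γ
  set q : ℂ := 2 * (Real.pi : ℂ) * Complex.I with hq
  have hd : ∀ i : Fin m, c ((i : ℕ) + 1 + 1) ≠ 0 := by
    intro i
    apply hcj _ (by omega)
    have := i.isLt
    omega
  rw [det_aux (-q / (c 1 + 1)) (-q / (c 1 - 1))
      (Matrix.of fun i j : Fin m =>
        q * (1 / c 1 + if i = j then 1 / c ((i : ℕ) + 1 + 1) else 0)) _
      ?h0 ?h10 ?hj0 ?hA]
  case h0 =>
    intro j
    simp [Matrix.of_apply]
  case h10 =>
    simp [Matrix.of_apply]
  case hj0 =>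
    intro i
    simp [Matrix.of_apply, Fin.val_succ]
  case hA =>
    intro i j
    simp [Matrix.of_apply, Fin.val_succ, Fin.succ_inj]
  rw [det_diag_add_const q (c 1) _ hd hc1]
  simp only [show m + 2 - 1 = m + 1 from rfl]
  have hsum : ∑ j ∈ Finset.Icc 1 (m + 1), c j
      = c 1 + ∑ i : Fin m, c ((i : ℕ) + 1 + 1) := by
    rw [← Finset.Ico_add_one_right_eq_Icc, Finset.sum_Ico_eq_sum_range,
      show m + 1 + 1 - 1 = m + 1 from rfl, Finset.sum_range_succ',
      Fin.sum_univ_eq_sum_range (fun i => c (i + 1 + 1)) m, add_comm]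
    congr 1
    · apply Finset.sum_congr rfl
      intro i _
      congr 1
      omega
  have hprod : ∏ j ∈ Finset.Icc 1 (m + 1), c j
      = c 1 * ∏ i : Fin m, c ((i : ℕ) + 1 + 1) := by
    rw [← Finset.Ico_add_one_right_eq_Icc, Finset.prod_Ico_eq_prod_range,
      show m + 1 + 1 - 1 = m + 1 from rfl, Finset.prod_range_succ',
      Fin.prod_univ_eq_prod_range (fun i => c (i + 1 + 1)) m, mul_comm]
    congr 1
    · apply Finset.prod_congr rfl
      intro i _
      congr 1
      omega
  have hcn : cn = -(c 1 + ∑ i : Fin m, c ((i : ℕ) + 1 + 1)) := by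
    have : cn = -(∑ j ∈ Finset.Icc 1 (m + 2 - 1), c j) := rfl
    rw [this, show m + 2 - 1 = m + 1 from rfl, hsum]
  rw [hcn, hprod]
  have hP : (∏ i : Fin m, c ((i : ℕ) + 1 + 1)) ≠ 0 :=
    Finset.prod_ne_zero_iff.mpr fun i _ => hd i
  have h1 : c 1 - 1 ≠ 0 := sub_ne_zero.mpr hc1'
  have h2 : c 1 + 1 ≠ 0 := by
    intro h
    exact hc1'' (by linear_combination h)
  field_simp
  ring
end
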